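/- arXiv:2109.01974 — 2 statements merged into one kernel-verified Lean document; each statement's English description precedes it below -/
import Mathlib

section
/- Let x, u ∈ ℝⁿ and J̄ := ∫₀¹ J(x + t u) dt. If M(‖x − x*‖ + ‖x − x* + u‖) ≤ μ, then J̄ is nonsingular and ‖J*(J̄⁻¹ − J*⁻¹)‖ ≤ M(‖x − x*‖ + ‖x − x* + u‖)/(2μ − M(‖x − x*‖ + ‖x − x* + u‖)) ≤ M(‖x − x*‖ + ‖x − x* + u‖)/μ. -/
/-!
Integrating the Lipschitz bound along the segment from `x` to `x + u` gives
`‖J̄ - J*‖ ≤ δ / 2` with `δ = M (‖x - x*‖ + ‖x - x* + u‖)`. Since `δ / 2 < μ = 1 / ‖J*⁻¹‖`, the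
Banach perturbation lemma for inverses in a complete normed ring makes `J̄` invertible with
`‖J* (J̄⁻¹ - J*⁻¹)‖ ≤ (δ / 2) / (μ - δ / 2)`.
-/

open Matrix MeasureTheory

noncomputable def specNorm {n : ℕ} (A : Matrix (Fin n) (Fin n) ℝ) : ℝ :=
  ‖Matrix.toEuclideanCLM (𝕜 := ℝ) A‖

noncomputable def frobNorm {n : ℕ} (A : Matrix (Fin n) (Fin n) ℝ) : ℝ :=
  Real.sqrt (∑ i, ∑ j, (A i j) ^ 2)

noncomputable def vnorm {n : ℕ} (x : Fin n → ℝ) : ℝ :=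
  Real.sqrt (∑ i, (x i) ^ 2)

noncomputable def intJac {n : ℕ} (J : (Fin n → ℝ) → Matrix (Fin n) (Fin n) ℝ)
    (x u : Fin n → ℝ) : Matrix (Fin n) (Fin n) ℝ :=
  Matrix.of fun i j => ∫ t in (0:ℝ)..(1:ℝ), J (x + t • u) i j

section PerturbationOfInverse

variable {R : Type*} [NormedRing R] {A B : R}

theorem isUnit_of_norm_sub_mul_inverse_lt_one [HasSummableGeomSeries R] (hB : IsUnit B)
    (h : ‖(A - B) * Ring.inverse B‖ < 1) : IsUnit A := by
  have hA : A = (1 - -((A - B) * Ring.inverse B)) * B := by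
    rw [sub_neg_eq_add, add_mul, one_mul, mul_assoc, Ring.inverse_mul_cancel B hB, mul_one,
      add_sub_cancel]
  rw [hA]
  exact (Units.oneSub _ (by rwa [norm_neg])).isUnit.mul hB

theorem norm_mul_inverse_sub_inverse_le (hA : IsUnit A) (hB : IsUnit B) {r : ℝ}
    (hX : ‖(A - B) * Ring.inverse B‖ ≤ r) (hr : r < 1) :
    ‖B * (Ring.inverse A - Ring.inverse B)‖ ≤ r / (1 - r) := by
  set X := (A - B) * Ring.inverse B
  set Z := B * (Ring.inverse A - Ring.inverse B)
  -- `Z = B A⁻¹ - 1` solves `Z = -X (1 + Z)`, since `X (1 + Z) = (A - B) A⁻¹`.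
  have hZ : -Z = X + X * Z := by
    have hXZ : X * (1 + Z) = 1 - B * Ring.inverse A := by
      simp only [X, Z, mul_sub, Ring.mul_inverse_cancel B hB, add_sub_cancel, mul_assoc,
        Ring.inverse_mul_cancel_left B _ hB, sub_mul, Ring.mul_inverse_cancel A hA, one_mul]
    rw [← mul_one_add, hXZ]
    simp only [Z, mul_sub, Ring.mul_inverse_cancel B hB, neg_sub]
  have hZr : ‖Z‖ ≤ r + r * ‖Z‖ := calc
    ‖Z‖ = ‖X + X * Z‖ := by rw [← hZ, norm_neg]
    _ ≤ ‖X‖ + ‖X‖ * ‖Z‖ := (norm_add_le _ _).trans (add_le_add_right (norm_mul_le _ _) _)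
    _ ≤ r + r * ‖Z‖ := by gcongr
  rw [le_div_iff₀ (by linarith)]
  linarith

end PerturbationOfInverse

section L2OperatorNorm

open scoped Matrix.Norms.L2Operator

variable {n : ℕ}

theorem specNorm_eq_norm (A : Matrix (Fin n) (Fin n) ℝ) : specNorm A = ‖A‖ := rfl

theorem vnorm_eq_norm_toLp (w : Fin n → ℝ) : vnorm w = ‖WithLp.toLp 2 w‖ := by
  simp [vnorm, EuclideanSpace.norm_eq]

theorem specNorm_inv_pos [Nonempty (Fin n)] {A : Matrix (Fin n) (Fin n) ℝ} (hA : IsUnit A.det) :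
    0 < specNorm A⁻¹ := by
  rw [specNorm_eq_norm, norm_pos_iff]
  exact (Matrix.isUnit_nonsing_inv_iff.mpr ((Matrix.isUnit_iff_isUnit_det A).mpr hA)).ne_zero

theorem isUnit_det_and_specNorm_mul_inv_sub_inv_le {A B : Matrix (Fin n) (Fin n) ℝ}
    (hB : IsUnit B.det) {ε μ : ℝ} (hinv : specNorm B⁻¹ ≤ μ⁻¹) (hAB : specNorm (A - B) ≤ ε)
    (hε : ε < μ) :
    IsUnit A.det ∧ specNorm (B * (A⁻¹ - B⁻¹)) ≤ ε / (μ - ε) := by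
  simp only [specNorm_eq_norm, Matrix.nonsing_inv_eq_ringInverse] at *
  have hμ : 0 < μ := ((norm_nonneg _).trans hAB).trans_lt hε
  have hX : ‖(A - B) * Ring.inverse B‖ ≤ ε / μ :=
    (norm_mul_le _ _).trans (mul_le_mul hAB hinv (norm_nonneg _) ((norm_nonneg _).trans hAB))
  have hεμ : ε / μ < 1 := (div_lt_one hμ).mpr hε
  have hB' : IsUnit B := (Matrix.isUnit_iff_isUnit_det B).mpr hB
  have hA' : IsUnit A := isUnit_of_norm_sub_mul_inverse_lt_one hB' (hX.trans_lt hεμ)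
  refine ⟨(Matrix.isUnit_iff_isUnit_det A).mp hA', ?_⟩
  calc ‖B * (Ring.inverse A - Ring.inverse B)‖ ≤ ε / μ / (1 - ε / μ) :=
        norm_mul_inverse_sub_inverse_le hA' hB' hX hεμ
    _ = ε / (μ - ε) := by field_simp

theorem intJac_eq_intervalIntegral {J : (Fin n → ℝ) → Matrix (Fin n) (Fin n) ℝ}
    (hJc : Continuous J) (x u : Fin n → ℝ) :
    intJac J x u = ∫ t in (0:ℝ)..1, J (x + t • u) := by
  ext i j
  let entry := LinearMap.toContinuousLinearMap (Matrix.entryLinearMap ℝ ℝ i j)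
  exact entry.intervalIntegral_comp_comm ((hJc.comp (by fun_prop)).intervalIntegrable _ _)

theorem specNorm_intJac_sub_le {J : (Fin n → ℝ) → Matrix (Fin n) (Fin n) ℝ} (hJc : Continuous J)
    {xs : Fin n → ℝ} {M : ℝ} (hM : 0 ≤ M)
    (hLip : ∀ z, specNorm (J z - J xs) ≤ M * vnorm (z - xs)) (x u : Fin n → ℝ) :
    specNorm (intJac J x u - J xs) ≤ M * (vnorm (x - xs) + vnorm (x - xs + u)) / 2 := by
  set a := vnorm (x - xs)
  set b := vnorm (x - xs + u)
  have hpath : Continuous fun t : ℝ => J (x + t • u) := hJc.comp (by fun_prop)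
  have hdiff : intJac J x u - J xs = ∫ t in (0:ℝ)..1, (J (x + t • u) - J xs) := by
    rw [intervalIntegral.integral_sub (hpath.intervalIntegrable _ _) intervalIntegrable_const,
      intervalIntegral.integral_const, intJac_eq_intervalIntegral hJc, sub_zero, one_smul]
  have hpointwise :
      ∀ t ∈ Set.Ioc (0:ℝ) 1, ‖J (x + t • u) - J xs‖ ≤ M * ((1 - t) * a + t * b) := by
    intro t ⟨ht0, ht1⟩
    have hseg : x + t • u - xs = (1 - t) • (x - xs) + t • (x - xs + u) := by module
    refine (hLip _).trans (mul_le_mul_of_nonneg_left ?_ hM)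
    simp only [hseg, a, b, vnorm_eq_norm_toLp, WithLp.toLp_add, WithLp.toLp_smul]
    exact (convexOn_norm convex_univ).2 trivial trivial (by linarith) ht0.le (by ring)
  have hmean : ∫ t in (0:ℝ)..1, M * ((1 - t) * a + t * b) = M * (a + b) / 2 := by
    have haffine : ∀ t : ℝ, M * ((1 - t) * a + t * b) = M * a + M * (b - a) * t :=
      fun t => by ring
    simp only [haffine]
    rw [intervalIntegral.integral_add intervalIntegrable_const
      (intervalIntegral.intervalIntegrable_id.const_mul _), intervalIntegral.integral_const,
      intervalIntegral.integral_const_mul, integral_id]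
    norm_num
    ring
  rw [specNorm_eq_norm, hdiff, ← hmean]
  exact intervalIntegral.norm_integral_le_of_norm_le zero_le_one (ae_of_all _ hpointwise)
    ((by fun_prop : Continuous fun t : ℝ => M * ((1 - t) * a + t * b)).intervalIntegrable _ _)

end L2OperatorNorm

theorem stmt13_general {n : ℕ}
    (J : (Fin n → ℝ) → Matrix (Fin n) (Fin n) ℝ)
    (hJc : Continuous J)
    (xs : Fin n → ℝ) (hJs : IsUnit (J xs).det)
    (μ : ℝ) (hμ : μ = 1 / specNorm ((J xs)⁻¹))
    (M : ℝ) (hM : 0 ≤ M)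
    (hLip : ∀ z, specNorm (J z - J xs) ≤ M * vnorm (z - xs))
    (x u : Fin n → ℝ)
    (hsmall : M * (vnorm (x - xs) + vnorm (x - xs + u)) ≤ μ) :
    IsUnit (intJac J x u).det ∧
      specNorm (J xs * ((intJac J x u)⁻¹ - (J xs)⁻¹)) ≤
        M * (vnorm (x - xs) + vnorm (x - xs + u))
          / (2 * μ - M * (vnorm (x - xs) + vnorm (x - xs + u))) ∧
      M * (vnorm (x - xs) + vnorm (x - xs + u))
          / (2 * μ - M * (vnorm (x - xs) + vnorm (x - xs + u))) ≤
        M * (vnorm (x - xs) + vnorm (x - xs + u)) / μ := by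
  set δ := M * (vnorm (x - xs) + vnorm (x - xs + u))
  have hδ : 0 ≤ δ := mul_nonneg hM (add_nonneg (Real.sqrt_nonneg _) (Real.sqrt_nonneg _))
  obtain hn | hn := isEmpty_or_nonempty (Fin n)
  · -- for `n = 0` everything vanishes, `μ = 1 / 0` included
    simp [δ, vnorm, specNorm, Subsingleton.elim _ (0 : Matrix (Fin n) (Fin n) ℝ)]
  have hμ_pos : 0 < μ := hμ ▸ one_div_pos.mpr (specNorm_inv_pos hJs)
  have hinv : specNorm (J xs)⁻¹ ≤ μ⁻¹ := by rw [hμ, one_div, inv_inv]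
  obtain ⟨hunit, hbound⟩ := isUnit_det_and_specNorm_mul_inv_sub_inv_le hJs hinv
    (specNorm_intJac_sub_le hJc hM hLip x u) (by linarith)
  refine ⟨hunit, hbound.trans_eq ?_, div_le_div_of_nonneg_left hδ hμ_pos (by linarith)⟩
  rw [div_div, mul_sub, mul_div_cancel₀ _ two_ne_zero]

/-- If `M(‖x − x*‖ + ‖x − x* + u‖) ≤ μ`, then the averaged Jacobian `J̄ = ∫₀¹ J(x + t u) dt`
is nonsingular and
`‖J*(J̄⁻¹ − J*⁻¹)‖ ≤ M(‖x − x*‖ + ‖x − x* + u‖)/(2μ − M(‖x − x*‖ + ‖x − x* + u‖))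
  ≤ M(‖x − x*‖ + ‖x − x* + u‖)/μ`. -/
theorem stmt13 {n : ℕ} (F : (Fin n → ℝ) → (Fin n → ℝ))
    (J : (Fin n → ℝ) → Matrix (Fin n) (Fin n) ℝ)
    (hF : ∀ z, HasFDerivAt F (LinearMap.toContinuousLinearMap ((J z).mulVecLin)) z)
    (hJc : Continuous J)
    (xs : Fin n → ℝ) (hxs : F xs = 0) (hJs : IsUnit (J xs).det)
    (μ : ℝ) (hμ : μ = 1 / specNorm ((J xs)⁻¹))
    (M : ℝ) (hM : 0 ≤ M)
    (hLip : ∀ z, specNorm (J z - J xs) ≤ M * vnorm (z - xs))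
    (x u : Fin n → ℝ)
    (hsmall : M * (vnorm (x - xs) + vnorm (x - xs + u)) ≤ μ) :
    IsUnit (intJac J x u).det ∧
      specNorm (J xs * ((intJac J x u)⁻¹ - (J xs)⁻¹)) ≤
        M * (vnorm (x - xs) + vnorm (x - xs + u))
          / (2 * μ - M * (vnorm (x - xs) + vnorm (x - xs + u))) ∧
      M * (vnorm (x - xs) + vnorm (x - xs + u))
          / (2 * μ - M * (vnorm (x - xs) + vnorm (x - xs + u))) ≤
        M * (vnorm (x - xs) + vnorm (x - xs + u)) / μ :=
  stmt13_general J hJc xs hJs μ hμ M hM hLip x u hsmall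
end

section
/- Suppose there exists q ∈ (0,1) such that τ₀ ≤ q/κ and M r₀/μ ≤ (q(1−q)/7)·(q/κ − τ₀). Then for all k ≥ 0, τ_k² ≤ τ₀² + ((1+q)/(1−q))·(2M r₀/(μκ) + 2M²r₀²/μ²) ≤ (q/κ)², and r_{k+1} ≤ q r_k. -/
open Matrix MeasureTheory

/-!
Write `E_k = J*(H_k - J*⁻¹)`, so that `τ_k = ‖E_k‖_F` and `H_k = J*⁻¹(I + E_k)`. By the mean value
theorem `F(x_k) = J*(x_k - x*) + ρ_k` with `‖ρ_k‖ ≤ M r_k²`, hence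
`r_{k+1} ≤ (κ τ_k + (1 + τ_k) M r_k / μ) r_k`. The update reads
`E_{k+1} = E_k (I - y yᵀ/yᵀy) + (J* u - y) yᵀ/yᵀy`: the first term projects every row of `E_k`
and so does not increase the Frobenius norm, while the secant error `‖J* u - y‖ ≤ M r_k ‖u‖` and
`‖y‖ ≥ (6/7) μ ‖u‖` bound the second one by `(7/6) M r_k / μ`.

By induction, as long as `r_j ≤ q^j r₀` the increments of `τ` form a geometric series, so
`τ_k ≤ τ₀ + (7/6) M r₀ / (μ (1 - q)) ≤ τ₀ + (q/6)(q/κ - τ₀)`; this keeps the contraction factor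
`κ τ_k + (1 + τ_k) M r_k / μ` below `q`. Summing the increments of `τ_k²` in the same way gives the
first bound, and the second one is arithmetic.
-/

variable {n : ℕ}

section Norms

lemma vnorm_eq_norm (x : Fin n → ℝ) : vnorm x = ‖WithLp.toLp 2 x‖ := by
  simp [vnorm, EuclideanSpace.norm_eq]

lemma vnorm_nonneg (x : Fin n → ℝ) : 0 ≤ vnorm x := Real.sqrt_nonneg _

lemma vnorm_pos {x : Fin n → ℝ} (hx : x ≠ 0) : 0 < vnorm x := by
  simpa [vnorm_eq_norm] using hx

lemma vnorm_sq (x : Fin n → ℝ) : vnorm x ^ 2 = x ⬝ᵥ x := by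
  rw [vnorm, Real.sq_sqrt (by positivity)]
  simp [dotProduct, sq]

lemma vnorm_add_le (x y : Fin n → ℝ) : vnorm (x + y) ≤ vnorm x + vnorm y := by
  simpa [vnorm_eq_norm] using norm_add_le (WithLp.toLp 2 x) (WithLp.toLp 2 y)

lemma vnorm_sub_comm (x y : Fin n → ℝ) : vnorm (x - y) = vnorm (y - x) := by
  simpa [vnorm_eq_norm] using norm_sub_rev (WithLp.toLp 2 x) (WithLp.toLp 2 y)

lemma specNorm_nonneg (A : Matrix (Fin n) (Fin n) ℝ) : 0 ≤ specNorm A := norm_nonneg _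

lemma vnorm_mulVec_le (A : Matrix (Fin n) (Fin n) ℝ) (v : Fin n → ℝ) :
    vnorm (A *ᵥ v) ≤ specNorm A * vnorm v := by
  simpa [vnorm_eq_norm, specNorm, toEuclideanCLM_toLp] using
    (toEuclideanCLM (𝕜 := ℝ) A).le_opNorm (WithLp.toLp 2 v)

lemma vnorm_le_specNorm_inv_mul {A : Matrix (Fin n) (Fin n) ℝ} (hA : IsUnit A.det)
    (v : Fin n → ℝ) : vnorm v ≤ specNorm A⁻¹ * vnorm (A *ᵥ v) := by
  simpa [mulVec_mulVec, nonsing_inv_mul _ hA] using vnorm_mulVec_le A⁻¹ (A *ᵥ v)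

lemma one_le_specNorm_inv_mul_specNorm {A : Matrix (Fin n) (Fin n) ℝ} (hA : IsUnit A.det)
    {v : Fin n → ℝ} (hv : v ≠ 0) : 1 ≤ specNorm A⁻¹ * specNorm A := by
  have hv' := vnorm_pos hv
  have := (vnorm_le_specNorm_inv_mul hA v).trans
    (mul_le_mul_of_nonneg_left (vnorm_mulVec_le A v) (specNorm_nonneg _))
  nlinarith

attribute [local instance] Matrix.frobeniusNormedAddCommGroup Matrix.frobeniusNormedSpace

lemma frobNorm_eq_norm (A : Matrix (Fin n) (Fin n) ℝ) : frobNorm A = ‖A‖ := by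
  simp [frobNorm, frobenius_norm_def, Real.sqrt_eq_rpow]

lemma frobNorm_nonneg (A : Matrix (Fin n) (Fin n) ℝ) : 0 ≤ frobNorm A := Real.sqrt_nonneg _

lemma frobNorm_add_le (A B : Matrix (Fin n) (Fin n) ℝ) :
    frobNorm (A + B) ≤ frobNorm A + frobNorm B := by
  simpa [frobNorm_eq_norm] using norm_add_le A B

lemma vnorm_mulVec_le_frobNorm (A : Matrix (Fin n) (Fin n) ℝ) (v : Fin n → ℝ) :
    vnorm (A *ᵥ v) ≤ frobNorm A * vnorm v := by
  rw [vnorm_eq_norm, vnorm_eq_norm, frobNorm_eq_norm,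
    ← frobenius_norm_replicateCol (ι := Unit), replicateCol_mulVec,
    ← frobenius_norm_replicateCol (ι := Unit)]
  exact frobenius_norm_mul _ _

lemma frobNorm_inv_dotProduct_smul_vecMulVec_le (w y : Fin n → ℝ) :
    frobNorm ((y ⬝ᵥ y)⁻¹ • vecMulVec w y) ≤ vnorm w / vnorm y := by
  have hsmul : frobNorm ((y ⬝ᵥ y)⁻¹ • vecMulVec w y) ≤ |(y ⬝ᵥ y)⁻¹| * (vnorm w * vnorm y) := by
    rw [frobNorm_eq_norm, vecMulVec_eq Unit, vnorm_eq_norm, vnorm_eq_norm,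
      ← frobenius_norm_replicateCol (ι := Unit), ← frobenius_norm_replicateRow (ι := Unit),
      ← Real.norm_eq_abs]
    exact (norm_smul_le _ _).trans (by gcongr; exact frobenius_norm_mul _ _)
  refine hsmul.trans_eq ?_
  rw [← vnorm_sq, abs_of_nonneg (by positivity)]
  rcases eq_or_ne (vnorm y) 0 with hy | hy
  · simp [hy]
  · field_simp

lemma dotProduct_self_sub_smul_le (r y : Fin n → ℝ) :
    (r - ((y ⬝ᵥ y)⁻¹ * (r ⬝ᵥ y)) • y) ⬝ᵥ (r - ((y ⬝ᵥ y)⁻¹ * (r ⬝ᵥ y)) • y) ≤ r ⬝ᵥ r := by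
  have hyy : 0 ≤ y ⬝ᵥ y := by simpa using dotProduct_star_self_nonneg y
  simp only [sub_dotProduct, dotProduct_sub, smul_dotProduct, dotProduct_smul, smul_eq_mul,
    dotProduct_comm y r]
  rcases hyy.eq_or_lt with h | h
  · simp [← h]
  · field_simp
    nlinarith [sq_nonneg (r ⬝ᵥ y)]

lemma frobNorm_sub_smul_vecMulVec_mulVec_le (X : Matrix (Fin n) (Fin n) ℝ) (y : Fin n → ℝ) :
    frobNorm (X - (y ⬝ᵥ y)⁻¹ • vecMulVec (X *ᵥ y) y) ≤ frobNorm X := by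
  have hrow : ∀ i, (X - (y ⬝ᵥ y)⁻¹ • vecMulVec (X *ᵥ y) y) i
      = X i - ((y ⬝ᵥ y)⁻¹ * (X i ⬝ᵥ y)) • y := by
    intro i; ext j; simp [vecMulVec_apply, mulVec, mul_assoc]
  have hfrob : ∀ A : Matrix (Fin n) (Fin n) ℝ, frobNorm A = √(∑ i, A i ⬝ᵥ A i) := by
    intro A; simp [frobNorm, dotProduct, sq]
  rw [hfrob, hfrob, funext hrow]
  gcongr with i
  exact dotProduct_self_sub_smul_le _ _

end Norms

section LinearAlgebra

variable {A H : Matrix (Fin n) (Fin n) ℝ}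

theorem vnorm_sub_mulVec_le (hA : IsUnit A.det) (d f : Fin n → ℝ) :
    vnorm (d - H *ᵥ f) ≤ specNorm A⁻¹ * (frobNorm (A * (H - A⁻¹)) * (specNorm A * vnorm d)
      + (1 + frobNorm (A * (H - A⁻¹))) * vnorm (f - A *ᵥ d)) := by
  set E := A * (H - A⁻¹)
  set ρ := f - A *ᵥ d
  have hAE : A⁻¹ * E = H - A⁻¹ := by
    rw [← Matrix.mul_assoc, nonsing_inv_mul _ hA, Matrix.one_mul]
  have key : H *ᵥ f - d = A⁻¹ *ᵥ (E *ᵥ (A *ᵥ d) + (ρ + E *ᵥ ρ)) := by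
    simp only [mulVec_add, mulVec_mulVec, hAE, sub_mulVec, nonsing_inv_mul _ hA, one_mulVec, ρ,
      mulVec_sub]
    abel
  have hE := frobNorm_nonneg E
  have hEAd : vnorm (E *ᵥ (A *ᵥ d)) ≤ frobNorm E * (specNorm A * vnorm d) :=
    (vnorm_mulVec_le_frobNorm _ _).trans (by gcongr; exact vnorm_mulVec_le _ _)
  rw [vnorm_sub_comm, key]
  refine (vnorm_mulVec_le _ _).trans (mul_le_mul_of_nonneg_left ?_ (specNorm_nonneg _))
  have := vnorm_mulVec_le_frobNorm E ρ
  linarith [vnorm_add_le (E *ᵥ (A *ᵥ d)) (ρ + E *ᵥ ρ), vnorm_add_le ρ (E *ᵥ ρ)]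

lemma broyden_error_update (hA : IsUnit A.det) (u y : Fin n → ℝ) :
    A * (H + (y ⬝ᵥ y)⁻¹ • vecMulVec (u - H *ᵥ y) y - A⁻¹)
      = (A * (H - A⁻¹) - (y ⬝ᵥ y)⁻¹ • vecMulVec ((A * (H - A⁻¹)) *ᵥ y) y)
        + (y ⬝ᵥ y)⁻¹ • vecMulVec (A *ᵥ u - y) y := by
  have hAH : A * H = A * (H - A⁻¹) + 1 := by
    rw [Matrix.mul_sub, mul_nonsing_inv _ hA, sub_add_cancel]
  rw [add_sub_right_comm, Matrix.mul_add, Matrix.mul_smul, mul_vecMulVec, mulVec_sub,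
    mulVec_mulVec, hAH, add_mulVec, one_mulVec, sub_add_eq_sub_sub_swap, sub_vecMulVec,
    sub_vecMulVec, smul_sub, smul_sub]
  abel

lemma vnorm_secant_div_le (hA : IsUnit A.det) {u y : Fin n → ℝ} {δ : ℝ} (hδ : 0 ≤ δ)
    (hsec : vnorm (A *ᵥ u - y) ≤ δ * vnorm u) (hsmall : specNorm A⁻¹ * δ ≤ 1 / 7) :
    vnorm (A *ᵥ u - y) / vnorm y ≤ 7 / 6 * (specNorm A⁻¹ * δ) := by
  have hν := specNorm_nonneg A⁻¹
  rcases (vnorm_nonneg y).eq_or_lt with hy | hy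
  · simp [← hy]; positivity
  have hAu : vnorm (A *ᵥ u) ≤ vnorm y + vnorm (A *ᵥ u - y) := by
    simpa using vnorm_add_le y (A *ᵥ u - y)
  have hu : vnorm u ≤ specNorm A⁻¹ * vnorm y + specNorm A⁻¹ * δ * vnorm u := by
    nlinarith [vnorm_le_specNorm_inv_mul hA u]
  have hu' : vnorm u ≤ 7 / 6 * specNorm A⁻¹ * vnorm y := by nlinarith [vnorm_nonneg u]
  rw [div_le_iff₀ hy]
  nlinarith

theorem frobNorm_broyden_update_le (hA : IsUnit A.det) {u y : Fin n → ℝ} {δ : ℝ} (hδ : 0 ≤ δ)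
    (hsec : vnorm (A *ᵥ u - y) ≤ δ * vnorm u) (hsmall : specNorm A⁻¹ * δ ≤ 1 / 7) :
    frobNorm (A * (H + (y ⬝ᵥ y)⁻¹ • vecMulVec (u - H *ᵥ y) y - A⁻¹))
      ≤ frobNorm (A * (H - A⁻¹)) + 7 / 6 * (specNorm A⁻¹ * δ) := by
  rw [broyden_error_update hA]
  refine (frobNorm_add_le _ _).trans (add_le_add (frobNorm_sub_smul_vecMulVec_mulVec_le _ y) ?_)
  exact (frobNorm_inv_dotProduct_smul_vecMulVec_le (A *ᵥ u - y) y).trans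
    (vnorm_secant_div_le hA hδ hsec hsmall)

end LinearAlgebra

section Broyden

variable {F : (Fin n → ℝ) → Fin n → ℝ} {J : (Fin n → ℝ) → Matrix (Fin n) (Fin n) ℝ}
  {xs : Fin n → ℝ} {M : ℝ}

theorem vnorm_sub_sub_mulVec_le
    (hF : ∀ z, HasFDerivAt F (LinearMap.toContinuousLinearMap ((J z).mulVecLin)) z)
    (hM : 0 ≤ M) (hLip : ∀ z, specNorm (J z - J xs) ≤ M * vnorm (z - xs))
    {R : ℝ} {a b : Fin n → ℝ} (ha : vnorm (a - xs) ≤ R) (hb : vnorm (b - xs) ≤ R) :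
    vnorm (F b - F a - J xs *ᵥ (b - a)) ≤ M * R * vnorm (b - a) := by
  let e := EuclideanSpace.equiv (Fin n) ℝ
  let G : EuclideanSpace ℝ (Fin n) → EuclideanSpace ℝ (Fin n) :=
    fun z => e.symm (F (e z) - J xs *ᵥ e z)
  have hG : ∀ z, HasFDerivAt G (toEuclideanCLM (𝕜 := ℝ) (J (e z) - J xs)) z := by
    intro z
    have hFA := (hF (e z)).sub (LinearMap.toContinuousLinearMap (J xs).mulVecLin).hasFDerivAt
    refine (e.symm.hasFDerivAt.comp z (hFA.comp z e.hasFDerivAt)).congr_fderiv ?_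
    ext v i
    simp [e]
    rfl
  have hball : ∀ z, vnorm (z - xs) ≤ R → e.symm z ∈ Metric.closedBall (e.symm xs) R := by
    intro z hz
    rwa [Metric.mem_closedBall, dist_eq_norm, ← map_sub, ← vnorm_eq_norm]
  have hbound : ∀ z ∈ Metric.closedBall (e.symm xs) R,
      ‖toEuclideanCLM (𝕜 := ℝ) (J (e z) - J xs)‖ ≤ M * R := by
    intro z hz
    refine (hLip (e z)).trans (mul_le_mul_of_nonneg_left ?_ hM)
    rwa [Metric.mem_closedBall, dist_eq_norm, ← e.symm_apply_apply z, ← map_sub,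
      ← vnorm_eq_norm] at hz
  have hmvt := (convex_closedBall (e.symm xs) R).norm_image_sub_le_of_norm_hasFDerivWithin_le
    (fun z _ => (hG z).hasFDerivWithinAt) hbound (hball a ha) (hball b hb)
  have hGab : G (e.symm b) - G (e.symm a) = e.symm (F b - F a - J xs *ᵥ (b - a)) := by
    simp only [G, e.apply_symm_apply, ← map_sub, mulVec_sub]
    congr 1
    abel
  rwa [hGab, ← map_sub, ← vnorm_eq_norm, ← vnorm_eq_norm] at hmvt

theorem broyden_dist_succ_le
    (hF : ∀ z, HasFDerivAt F (LinearMap.toContinuousLinearMap ((J z).mulVecLin)) z)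
    (hM : 0 ≤ M) (hLip : ∀ z, specNorm (J z - J xs) ≤ M * vnorm (z - xs)) (hxs : F xs = 0)
    (hJs : IsUnit (J xs).det) {μ κ : ℝ} (hμ : 0 < μ) (hν : specNorm (J xs)⁻¹ = 1 / μ)
    (hκ : specNorm (J xs) = κ * μ) (H : Matrix (Fin n) (Fin n) ℝ) (x : Fin n → ℝ) :
    vnorm (x - H *ᵥ F x - xs) ≤ (κ * frobNorm (J xs * (H - (J xs)⁻¹))
      + (1 + frobNorm (J xs * (H - (J xs)⁻¹))) * (M * vnorm (x - xs) / μ)) * vnorm (x - xs) := by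
  have hρ := vnorm_sub_sub_mulVec_le hF hM hLip (a := xs) (b := x) (by simp [vnorm]) le_rfl
  rw [hxs, sub_zero] at hρ
  set τ := frobNorm (J xs * (H - (J xs)⁻¹))
  set r := vnorm (x - xs)
  have hτ : 0 ≤ τ := frobNorm_nonneg _
  rw [sub_right_comm]
  calc _ ≤ 1 / μ * (τ * (κ * μ * r) + (1 + τ) * vnorm (F x - J xs *ᵥ (x - xs))) := by
        rw [← hν, ← hκ]; exact vnorm_sub_mulVec_le hJs _ _
    _ ≤ 1 / μ * (τ * (κ * μ * r) + (1 + τ) * (M * r * r)) := by gcongr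
    _ = (κ * τ + (1 + τ) * (M * r / μ)) * r := by field_simp

theorem broyden_frobNorm_succ_le
    (hF : ∀ z, HasFDerivAt F (LinearMap.toContinuousLinearMap ((J z).mulVecLin)) z)
    (hM : 0 ≤ M) (hLip : ∀ z, specNorm (J z - J xs) ≤ M * vnorm (z - xs))
    (hJs : IsUnit (J xs).det) {μ : ℝ} (hν : specNorm (J xs)⁻¹ = 1 / μ)
    (H : Matrix (Fin n) (Fin n) ℝ) {x x' : Fin n → ℝ} (hclose : vnorm (x' - xs) ≤ vnorm (x - xs))
    (hsmall : M * vnorm (x - xs) / μ ≤ 1 / 7) :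
    frobNorm (J xs * (H + ((F x' - F x) ⬝ᵥ (F x' - F x))⁻¹ •
        vecMulVec (x' - x - H *ᵥ (F x' - F x)) (F x' - F x) - (J xs)⁻¹))
      ≤ frobNorm (J xs * (H - (J xs)⁻¹)) + 7 / 6 * (M * vnorm (x - xs) / μ) := by
  have hsec := vnorm_sub_sub_mulVec_le hF hM hLip le_rfl hclose
  rw [vnorm_sub_comm] at hsec
  have := frobNorm_broyden_update_le (H := H) hJs (mul_nonneg hM (vnorm_nonneg _)) hsec
    (by rwa [hν, one_div_mul_eq_div])
  rwa [hν, one_div_mul_eq_div] at this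

end Broyden

lemma le_add_div_one_sub_of_le_add_mul_pow {a : ℕ → ℝ} {b q : ℝ} (hb : 0 ≤ b) (hq0 : 0 ≤ q)
    (hq1 : q < 1) {k : ℕ} (h : ∀ j < k, a (j + 1) ≤ a j + b * q ^ j) :
    a k ≤ a 0 + b / (1 - q) := by
  have hsum : a k ≤ a 0 + b * ∑ j ∈ Finset.range k, q ^ j := by
    induction k with
    | zero => simp
    | succ k ih =>
      rw [Finset.sum_range_succ, mul_add]
      linarith [ih fun j hj => h j (by omega), h k (by omega)]
  have hgeom : ∑ j ∈ Finset.range k, q ^ j ≤ 1 / (1 - q) := by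
    have h := geom_sum_Ico_le_of_lt_one (x := q) (m := 0) (n := k) hq0 hq1
    rwa [← Finset.range_eq_Ico, pow_zero] at h
  calc a k ≤ a 0 + b * (1 / (1 - q)) := hsum.trans (by gcongr)
    _ = a 0 + b / (1 - q) := by ring

lemma contraction_factor_le {κ q τ₀ c t : ℝ} (hκ : 1 ≤ κ) (hq0 : 0 < q) (hq1 : q < 1)
    (hc0 : 0 ≤ c) (hc : c ≤ q * (1 - q) / 7 * (q / κ - τ₀)) (ht : t ≤ τ₀ + 7 / 6 * c / (1 - q)) :
    κ * t + 2 * c ≤ q := by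
  set g := q / κ - τ₀
  have hq1' : 0 < 1 - q := sub_pos.2 hq1
  have hg : 0 ≤ g := by
    by_contra! h
    nlinarith [mul_pos (mul_pos hq0 hq1') (neg_pos.2 h)]
  have hsum : 7 / 6 * c / (1 - q) ≤ q * g / 6 := by
    rw [div_le_iff₀ hq1']; nlinarith
  have hκτ₀ : κ * τ₀ = q - κ * g := by
    simp only [g]; field_simp; ring
  have hκt : κ * t ≤ q - κ * g + κ * (q * g / 6) := by
    nlinarith [mul_le_mul_of_nonneg_left (ht.trans (add_le_add_right hsum τ₀)) (by linarith : 0 ≤ κ)]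
  have hc' : 2 * c ≤ g / 14 := by nlinarith [mul_nonneg hg (sq_nonneg (q - 1 / 2))]
  nlinarith [mul_nonneg (sub_nonneg.2 hκ) hg, mul_nonneg (mul_nonneg hq0.le hg) (by linarith : 0 ≤ κ)]

lemma sq_add_one_add_div_mul_le_sq {κ q τ₀ c : ℝ} (hκ : 0 < κ) (hq0 : 0 < q) (hq1 : q < 1) (hτ₀ : 0 ≤ τ₀)
    (hc0 : 0 ≤ c) (hc : c ≤ q * (1 - q) / 7 * (q / κ - τ₀)) :
    τ₀ ^ 2 + (1 + q) / (1 - q) * (2 * c / κ + 2 * c ^ 2) ≤ (q / κ) ^ 2 := by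
  set B := q / κ
  set g := B - τ₀
  have hq1' : 0 < 1 - q := sub_pos.2 hq1
  have hB : 0 ≤ B := by positivity
  have hg : 0 ≤ g := by
    by_contra! h
    nlinarith [mul_pos (mul_pos hq0 hq1') (neg_pos.2 h)]
  have hw : c / (1 - q) ≤ q * g / 7 := by rw [div_le_iff₀ hq1']; nlinarith
  have hw0 : 0 ≤ c / (1 - q) := by positivity
  have hlin : (1 + q) / (1 - q) * (2 * c / κ) ≤ 4 / 7 * g * B := by
    calc (1 + q) / (1 - q) * (2 * c / κ) = 2 * (1 + q) / κ * (c / (1 - q)) := by ring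
      _ ≤ 2 * (1 + q) / κ * (q * g / 7) := by gcongr
      _ = 2 * (1 + q) / 7 * g * B := by ring
      _ ≤ 4 / 7 * g * B := by gcongr; linarith
  have hquad : (1 + q) / (1 - q) * (2 * c ^ 2) ≤ 2 / 49 * g ^ 2 := by
    calc (1 + q) / (1 - q) * (2 * c ^ 2) = 2 * (1 + q) * c * (c / (1 - q)) := by ring
      _ ≤ 2 * (1 + q) * (q * (1 - q) / 7 * g) * (q * g / 7) := by gcongr
      _ = 2 / 49 * (q ^ 2 * (1 - q ^ 2)) * g ^ 2 := by ring
      _ ≤ 2 / 49 * g ^ 2 := by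
        gcongr
        nlinarith [sq_nonneg q]
  have hτ₀ : τ₀ = B - g := by ring
  rw [hτ₀, mul_add]
  nlinarith [mul_le_mul_of_nonneg_left (show g ≤ B by linarith) hg]

lemma sq_le_sq_add_of_le_add_mul_pow {κ q c : ℝ} {τ : ℕ → ℝ} (hκ : 0 < κ) (hq0 : 0 < q)
    (hq1 : q < 1) (hc0 : 0 ≤ c) (hτ : ∀ k, 0 ≤ τ k)
    (hτ_succ : ∀ k, τ (k + 1) ≤ τ k + 7 / 6 * c * q ^ k) (hτq : ∀ k, τ k ≤ q / κ) (k : ℕ) :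
    τ k ^ 2 ≤ τ 0 ^ 2 + (1 + q) / (1 - q) * (2 * c / κ + 2 * c ^ 2) := by
  have hstep : ∀ j, τ (j + 1) ^ 2 ≤ τ j ^ 2 + (7 / 3 * (q / κ) * c + 49 / 36 * c ^ 2) * q ^ j := by
    intro j
    have hqj : q ^ j ≤ 1 := pow_le_one₀ hq0.le hq1.le
    have hqj0 : 0 ≤ q ^ j := by positivity
    have hsq := pow_le_pow_left₀ (hτ (j + 1)) (hτ_succ j) 2
    nlinarith [mul_le_mul_of_nonneg_right (hτq j) (mul_nonneg hc0 hqj0),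
      mul_le_mul_of_nonneg_left hqj (mul_nonneg (sq_nonneg c) hqj0)]
  have hsum := le_add_div_one_sub_of_le_add_mul_pow (a := fun j => τ j ^ 2)
    (b := 7 / 3 * (q / κ) * c + 49 / 36 * c ^ 2) (by positivity) hq0.le hq1 (k := k)
    fun j _ => hstep j
  have hconst : 7 / 3 * (q / κ) * c + 49 / 36 * c ^ 2 ≤ (1 + q) * (2 * c / κ + 2 * c ^ 2) := by
    have hcκ : 0 ≤ c / κ := by positivity
    rw [show 7 / 3 * (q / κ) * c = 7 / 3 * q * (c / κ) by ring, mul_div_assoc]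
    nlinarith [mul_nonneg hq0.le hcκ, mul_nonneg hq0.le (sq_nonneg c)]
  calc τ k ^ 2 ≤ τ 0 ^ 2 + (7 / 3 * (q / κ) * c + 49 / 36 * c ^ 2) / (1 - q) := hsum
    _ ≤ τ 0 ^ 2 + (1 + q) * (2 * c / κ + 2 * c ^ 2) / (1 - q) := by gcongr
    _ = τ 0 ^ 2 + (1 + q) / (1 - q) * (2 * c / κ + 2 * c ^ 2) := by ring

theorem broyden_scalar_steps {κ μ M q : ℝ} {τ r : ℕ → ℝ} (hκ : 1 ≤ κ) (hμ : 0 < μ)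
    (hM : 0 ≤ M) (hq0 : 0 < q) (hq1 : q < 1) (hτ : ∀ k, 0 ≤ τ k) (hr : ∀ k, 0 ≤ r k)
    (hr_succ : ∀ k, r (k + 1) ≤ (κ * τ k + (1 + τ k) * (M * r k / μ)) * r k)
    (hτ_succ : ∀ k, r (k + 1) ≤ r k → M * r k / μ ≤ 1 / 7 →
      τ (k + 1) ≤ τ k + 7 / 6 * (M * r k / μ))
    (hτ0 : τ 0 ≤ q / κ) (hr0 : M * r 0 / μ ≤ q * (1 - q) / 7 * (q / κ - τ 0)) (k : ℕ) :
    r (k + 1) ≤ q * r k ∧ τ (k + 1) ≤ τ k + 7 / 6 * (M * r 0 / μ) * q ^ k ∧ τ k ≤ q / κ := by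
  set c := M * r 0 / μ
  have hc0 : 0 ≤ c := div_nonneg (mul_nonneg hM (hr 0)) hμ.le
  have hc17 : c ≤ 1 / 7 := by
    have : q / κ ≤ 1 := (div_le_one (by linarith)).2 (by linarith)
    nlinarith [hτ 0, mul_nonneg hq0.le (sub_nonneg.2 hq1.le), sq_nonneg (q - 1 / 2)]
  have step : ∀ k, r k ≤ q ^ k * r 0 → τ k ≤ τ 0 + 7 / 6 * c / (1 - q) →
      r (k + 1) ≤ q * r k ∧ τ (k + 1) ≤ τ k + 7 / 6 * c * q ^ k ∧ τ k ≤ q / κ := by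
    intro k hrk hτk
    have hfactor := contraction_factor_le hκ hq0 hq1 hc0 hr0 hτk
    have hqk : q ^ k ≤ 1 := pow_le_one₀ hq0.le hq1.le
    have hδ : M * r k / μ ≤ c * q ^ k := by
      rw [mul_comm c, ← mul_div_assoc, ← mul_assoc, mul_comm _ M, mul_assoc]
      gcongr
    have hδ0 : 0 ≤ M * r k / μ := div_nonneg (mul_nonneg hM (hr k)) hμ.le
    have hτk1 : τ k ≤ 1 := by nlinarith [hτ k]
    have hrq : r (k + 1) ≤ q * r k := by
      refine (hr_succ k).trans (mul_le_mul_of_nonneg_right ?_ (hr k))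
      nlinarith [hτ k, mul_le_mul_of_nonneg_left hqk hc0]
    refine ⟨hrq, ?_, (le_div_iff₀ (by linarith)).2 (by nlinarith)⟩
    have := hτ_succ k (hrq.trans (by nlinarith [hr k])) (by nlinarith)
    linarith
  have hτ_bound : ∀ k, (∀ j < k, τ (j + 1) ≤ τ j + 7 / 6 * c * q ^ j) →
      τ k ≤ τ 0 + 7 / 6 * c / (1 - q) := fun k h => by
    simpa only [mul_div_assoc] using
      le_add_div_one_sub_of_le_add_mul_pow (b := 7 / 6 * c) (by positivity) hq0.le hq1 h
  have hinv : ∀ k, r k ≤ q ^ k * r 0 ∧ ∀ j < k, τ (j + 1) ≤ τ j + 7 / 6 * c * q ^ j := by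
    intro k
    induction k with
    | zero => simp
    | succ k ih =>
      obtain ⟨hrk, hτj⟩ := ih
      obtain ⟨hr1, hτ1, -⟩ := step k hrk (hτ_bound k hτj)
      refine ⟨by rw [pow_succ', mul_assoc]; nlinarith, fun j hj => ?_⟩
      rcases Nat.lt_succ_iff_lt_or_eq.1 hj with hj | rfl
      exacts [hτj j hj, hτ1]
  exact step k (hinv k).1 (hτ_bound k (hinv k).2)

theorem stmt14_general {n : ℕ} (F : (Fin n → ℝ) → (Fin n → ℝ))
    (J : (Fin n → ℝ) → Matrix (Fin n) (Fin n) ℝ)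
    (hF : ∀ z, HasFDerivAt F (LinearMap.toContinuousLinearMap ((J z).mulVecLin)) z)
    (xs : Fin n → ℝ) (hxs : F xs = 0) (hJs : IsUnit (J xs).det)
    (μ L κ : ℝ) (hμ : μ = 1 / specNorm ((J xs)⁻¹)) (hL : L = specNorm (J xs)) (hκ : κ = L / μ)
    (M : ℝ) (hM : 0 ≤ M)
    (hLip : ∀ z, specNorm (J z - J xs) ≤ M * vnorm (z - xs))
    (x : ℕ → Fin n → ℝ) (H : ℕ → Matrix (Fin n) (Fin n) ℝ)
    (hFk : ∀ k, F (x k) ≠ 0)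
    (hx : ∀ k, x (k + 1) = x k - H k *ᵥ F (x k))
    (hH : ∀ k, H (k + 1) = H k +
        ((F (x (k + 1)) - F (x k)) ⬝ᵥ (F (x (k + 1)) - F (x k)))⁻¹ •
          vecMulVec (x (k + 1) - x k - H k *ᵥ (F (x (k + 1)) - F (x k)))
            (F (x (k + 1)) - F (x k)))
    (q : ℝ) (hq0 : 0 < q) (hq1 : q < 1)
    (hτ0 : frobNorm (J xs * (H 0 - (J xs)⁻¹)) ≤ q / κ)
    (hr0 : M * vnorm (x 0 - xs) / μ ≤
      q * (1 - q) / 7 * (q / κ - frobNorm (J xs * (H 0 - (J xs)⁻¹)))) :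
    (∀ k : ℕ, frobNorm (J xs * (H k - (J xs)⁻¹)) ^ 2 ≤
        frobNorm (J xs * (H 0 - (J xs)⁻¹)) ^ 2
          + (1 + q) / (1 - q) *
              (2 * M * vnorm (x 0 - xs) / (μ * κ) + 2 * M ^ 2 * vnorm (x 0 - xs) ^ 2 / μ ^ 2)) ∧
      (frobNorm (J xs * (H 0 - (J xs)⁻¹)) ^ 2
          + (1 + q) / (1 - q) *
              (2 * M * vnorm (x 0 - xs) / (μ * κ) + 2 * M ^ 2 * vnorm (x 0 - xs) ^ 2 / μ ^ 2)
        ≤ (q / κ) ^ 2) ∧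
      (∀ k : ℕ, vnorm (x (k + 1) - xs) ≤ q * vnorm (x k - xs)) := by
  have hcond := one_le_specNorm_inv_mul_specNorm hJs (hFk 0)
  have hν : specNorm (J xs)⁻¹ = 1 / μ := by rw [hμ, one_div_one_div]
  have hμ0 : 0 < μ := by
    rw [hμ, one_div_pos]
    by_contra! h
    nlinarith [specNorm_nonneg (J xs)]
  have hLμ : specNorm (J xs) = κ * μ := by rw [hκ, div_mul_cancel₀ _ hμ0.ne', hL]
  have hκ1 : 1 ≤ κ := by
    rwa [hν, hLμ, one_div_mul_eq_div, mul_div_cancel_right₀ _ hμ0.ne'] at hcond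
  have steps := broyden_scalar_steps (τ := fun k => frobNorm (J xs * (H k - (J xs)⁻¹)))
    (r := fun k => vnorm (x k - xs)) hκ1 hμ0 hM hq0 hq1 (fun _ => frobNorm_nonneg _)
    (fun _ => vnorm_nonneg _)
    (fun k => by rw [hx k]; exact broyden_dist_succ_le hF hM hLip hxs hJs hμ0 hν hLμ _ _)
    (fun k hclose hsmall => by
      rw [hH k]; exact broyden_frobNorm_succ_le hF hM hLip hJs hν _ hclose hsmall)
    hτ0 hr0
  have hc0 : 0 ≤ M * vnorm (x 0 - xs) / μ := div_nonneg (mul_nonneg hM (vnorm_nonneg _)) hμ0.le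
  rw [show 2 * M * vnorm (x 0 - xs) / (μ * κ) + 2 * M ^ 2 * vnorm (x 0 - xs) ^ 2 / μ ^ 2
      = 2 * (M * vnorm (x 0 - xs) / μ) / κ + 2 * (M * vnorm (x 0 - xs) / μ) ^ 2 by ring]
  exact ⟨sq_le_sq_add_of_le_add_mul_pow (by linarith) hq0 hq1 hc0 (fun _ => frobNorm_nonneg _)
      (fun k => (steps k).2.1) (fun k => (steps k).2.2),
    sq_add_one_add_div_mul_le_sq (by linarith) hq0 hq1 (frobNorm_nonneg _) hc0 hr0, fun k => (steps k).1⟩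

/-- Local linear convergence of Broyden's "bad" scheme (Lemma: base-bad). If for some
`q ∈ (0,1)` the initial quantities satisfy `τ₀ ≤ q/κ` and
`M r₀/μ ≤ (q(1−q)/7)(q/κ − τ₀)`, then for all `k`,
`τ_k² ≤ τ₀² + ((1+q)/(1−q))(2M r₀/(μκ) + 2M² r₀²/μ²) ≤ (q/κ)²` and `r_{k+1} ≤ q r_k`. -/
theorem stmt14 {n : ℕ} (F : (Fin n → ℝ) → (Fin n → ℝ))
    (J : (Fin n → ℝ) → Matrix (Fin n) (Fin n) ℝ)
    (hF : ∀ z, HasFDerivAt F (LinearMap.toContinuousLinearMap ((J z).mulVecLin)) z)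
    (hJc : Continuous J)
    (xs : Fin n → ℝ) (hxs : F xs = 0) (hJs : IsUnit (J xs).det)
    (μ L κ : ℝ) (hμ : μ = 1 / specNorm ((J xs)⁻¹)) (hL : L = specNorm (J xs)) (hκ : κ = L / μ)
    (M : ℝ) (hM : 0 ≤ M)
    (hLip : ∀ z, specNorm (J z - J xs) ≤ M * vnorm (z - xs))
    (x : ℕ → Fin n → ℝ) (H : ℕ → Matrix (Fin n) (Fin n) ℝ)
    (hHk : ∀ k, IsUnit (H k).det) (hFk : ∀ k, F (x k) ≠ 0)
    (hyk : ∀ k, F (x (k + 1)) - F (x k) ≠ 0)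
    (hx : ∀ k, x (k + 1) = x k - H k *ᵥ F (x k))
    (hH : ∀ k, H (k + 1) = H k +
        ((F (x (k + 1)) - F (x k)) ⬝ᵥ (F (x (k + 1)) - F (x k)))⁻¹ •
          vecMulVec (x (k + 1) - x k - H k *ᵥ (F (x (k + 1)) - F (x k)))
            (F (x (k + 1)) - F (x k)))
    (q : ℝ) (hq0 : 0 < q) (hq1 : q < 1)
    (hτ0 : frobNorm (J xs * (H 0 - (J xs)⁻¹)) ≤ q / κ)
    (hr0 : M * vnorm (x 0 - xs) / μ ≤
      q * (1 - q) / 7 * (q / κ - frobNorm (J xs * (H 0 - (J xs)⁻¹)))) :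
    (∀ k : ℕ, frobNorm (J xs * (H k - (J xs)⁻¹)) ^ 2 ≤
        frobNorm (J xs * (H 0 - (J xs)⁻¹)) ^ 2
          + (1 + q) / (1 - q) *
              (2 * M * vnorm (x 0 - xs) / (μ * κ) + 2 * M ^ 2 * vnorm (x 0 - xs) ^ 2 / μ ^ 2)) ∧
      (frobNorm (J xs * (H 0 - (J xs)⁻¹)) ^ 2
          + (1 + q) / (1 - q) *
              (2 * M * vnorm (x 0 - xs) / (μ * κ) + 2 * M ^ 2 * vnorm (x 0 - xs) ^ 2 / μ ^ 2)
        ≤ (q / κ) ^ 2) ∧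
      (∀ k : ℕ, vnorm (x (k + 1) - xs) ≤ q * vnorm (x k - xs)) :=
  stmt14_general F J hF xs hxs hJs μ L κ hμ hL hκ M hM hLip x H hFk hx hH q hq0 hq1 hτ0 hr0
end
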